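/- arXiv:2510.17161 — 2 statements merged into one kernel-verified Lean document; each statement's English description precedes it below -/
import Mathlib

section
/- Let k be an algebraically closed field of characteristic 2 and let a, c ∈ k[t] with a ≠ 0, deg a ≤ 1, and a·c' = c·a'. Then a divides c and there exists f ∈ k[t] with c = f²·a. -/
/-!
In characteristic 2 the hypothesis says `(c * a)' = c' * a + c * a' = 2 * a * c' = 0`, so over a
perfect field `c * a = g ^ 2` for some polynomial `g`. A polynomial of degree at most one is
squarefree, hence `a ∣ g ^ 2` forces `g = f * a`, and cancelling `a` gives `c = f ^ 2 * a`.
-/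

open Polynomial

theorem Polynomial.exists_eq_pow_of_derivative_eq_zero {R : Type*} [CommSemiring R]
    [NoZeroDivisors R] (p : ℕ) [ExpChar R p] [PerfectRing R p] {f : R[X]}
    (hf : derivative f = 0) : ∃ g : R[X], f = g ^ p :=
  ⟨_, by rw [← polynomial_expand_eq, expand_contract' p hf]⟩

theorem Polynomial.squarefree_of_degree_le_one {K : Type*} [Field K] {a : K[X]} (ha : a ≠ 0)
    (h : a.degree ≤ 1) : Squarefree a := by
  by_cases hu : IsUnit a
  · exact hu.squarefree
  · have h1 : 1 ≤ a.degree :=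
      Nat.WithBot.one_le_iff_zero_lt.mpr (degree_pos_of_ne_zero_of_nonunit ha hu)
    exact (irreducible_of_degree_eq_one (le_antisymm h h1)).squarefree

theorem Polynomial.exists_eq_sq_mul_of_mul_derivative_eq {K : Type*} [Field K] [CharP K 2]
    [PerfectRing K 2] {a c : K[X]} (ha : Squarefree a)
    (h : a * derivative c = c * derivative a) : ∃ f : K[X], c = f ^ 2 * a := by
  have hca : derivative (c * a) = 0 := by
    rw [derivative_mul, ← h, mul_comm, CharTwo.add_self_eq_zero]
  obtain ⟨g, hg⟩ := exists_eq_pow_of_derivative_eq_zero 2 hca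
  obtain ⟨f, rfl⟩ : a ∣ g := (ha.dvd_pow_iff_dvd two_ne_zero).mp ⟨c, by rw [← hg, mul_comm]⟩
  refine ⟨f, mul_right_cancel₀ ha.ne_zero ?_⟩
  rw [hg]
  ring

theorem stmt_1 (k : Type*) [Field k] [IsAlgClosed k] [CharP k 2]
    (a c : k[X]) (ha : a ≠ 0) (hdeg : a.degree ≤ 1)
    (h : a * derivative c = c * derivative a) :
    a ∣ c ∧ ∃ f : k[X], c = f ^ 2 * a := by
  obtain ⟨f, hf⟩ := exists_eq_sq_mul_of_mul_derivative_eq (squarefree_of_degree_le_one ha hdeg) h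
  exact ⟨⟨f ^ 2, hf.trans (mul_comm _ _)⟩, f, hf⟩
end

section
/- Let k be an algebraically closed field of characteristic 2 and let a, c ∈ k[t] with a ≠ 0, deg a ≤ 1, and a·c' + c·a' = a². Then a divides c and there exists f ∈ k[t] with c = (t + f²)·a. -/
/-!
Since `deg a ≤ 1`, the polynomial `a` is coprime to its derivative, and the hypothesis
`a c' + c a' = a²` gives `a ∣ c a'`, hence `a ∣ c`. Writing `c = a d`, the hypothesis becomes
`a² d' = a²` in characteristic 2, so `(d - t)' = 0`; over a perfect field of characteristic 2
a polynomial with vanishing derivative is a square.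
-/

open Polynomial

namespace Polynomial

theorem exists_eq_pow_of_derivative_eq_zero_s2 {R : Type*} [CommRing R] [NoZeroDivisors R]
    (p : ℕ) [ExpChar R p] [PerfectRing R p] {q : R[X]} (hq : derivative q = 0) :
    ∃ g : R[X], q = g ^ p :=
  ⟨_, (expand_contract' p hq).symm.trans (polynomial_expand_eq R p _)⟩

theorem isCoprime_derivative_of_natDegree_le_one {K : Type*} [Field K] {a : K[X]}
    (ha : a ≠ 0) (hdeg : a.natDegree ≤ 1) : IsCoprime a (derivative a) := by
  obtain ⟨u, v, rfl⟩ := exists_eq_X_add_C_of_natDegree_le_one hdeg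
  rcases eq_or_ne u 0 with rfl | hu
  · have hv : v ≠ 0 := by rintro rfl; simp at ha
    refine isCoprime_one_left.of_isCoprime_of_dvd_left (IsUnit.dvd ?_)
    simpa using hv
  · refine isCoprime_one_right.of_isCoprime_of_dvd_right (IsUnit.dvd ?_)
    simpa using hu

end Polynomial

theorem stmt_2 (k : Type*) [Field k] [IsAlgClosed k] [CharP k 2]
    (a c : k[X]) (ha : a ≠ 0) (hdeg : a.degree ≤ 1)
    (h : a * derivative c + c * derivative a = a ^ 2) :
    a ∣ c ∧ ∃ f : k[X], c = (X + f ^ 2) * a := by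
  have hcop := isCoprime_derivative_of_natDegree_le_one ha (natDegree_le_iff_degree_le.mpr hdeg)
  have hdvd : a ∣ c := hcop.dvd_of_dvd_mul_right ⟨a - derivative c, by linear_combination h⟩
  obtain ⟨d, rfl⟩ := hdvd
  have h2 : (2 : k[X]) = 0 := CharP.ofNat_eq_zero k[X] 2
  have hd : derivative d = 1 := by
    refine mul_left_cancel₀ (pow_ne_zero 2 ha) ?_
    rw [derivative_mul] at h
    linear_combination h - a * derivative a * d * h2
  obtain ⟨f, hf⟩ := exists_eq_pow_of_derivative_eq_zero_s2 2 (q := d - X) (by simp [hd])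
  exact ⟨dvd_mul_right a d, f, by linear_combination a * hf⟩
end
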